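/- Let 0 < α < n and Φ ∈ S(ℝⁿ) with supp(Φ) ⊂ B_{1/4}(0). Then there is C = C(Φ,n,α) such that sup_{t>0} |(Φ_t^d ∗ I_α a)(j)| ≤ C(#Q)^{α/n − 1/p} for all j ∈ ℤⁿ and all sequences a supported in a discrete cube Q with ‖a‖_{ℓ^∞} ≤ (#Q)^{−1/p}. -/

import Mathlib

open scoped BigOperators ENNReal

noncomputable section

/-- Euclidean norm of an integer vector in `ℤⁿ`. -/
def znorm {n : ℕ} (j : Fin n → ℤ) : ℝ := Real.sqrt (∑ l, ((j l : ℝ)) ^ 2)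

/-- `ℓ^∞` norm of an integer vector, as a natural number. -/
def zinf {n : ℕ} (j : Fin n → ℤ) : ℕ := Finset.univ.sup fun l => (j l).natAbs

/-- The discrete cube centered at `k0` with "radius" `m` (side length `2m+1`),
i.e. `{i : |i - k0|_∞ ≤ m}`. -/
def dcube {n : ℕ} (k0 : Fin n → ℤ) (m : ℕ) : Finset (Fin n → ℤ) :=
  Finset.Icc (fun l => k0 l - m) (fun l => k0 l + m)

/-- The discrete Riesz potential `(I_α b)(j) = ∑_{i ≠ j} b(i) |i-j|^{α-n}`. -/
def rieszPot {n : ℕ} (α : ℝ) (b : (Fin n → ℤ) → ℝ) (j : Fin n → ℤ) : ℝ :=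
  ∑' i : {i : Fin n → ℤ // i ≠ j}, b i.1 * znorm (i.1 - j) ^ (α - n)

/-- Embedding of `ℤⁿ` into Euclidean space `ℝⁿ`. -/
def toE {n : ℕ} (j : Fin n → ℤ) : EuclideanSpace ℝ (Fin n) := WithLp.toLp 2 (fun l => (j l : ℝ))

/-- The discretized dilation `Φ_t^d(j) = t^{-n} Φ(j/t)` for `j ≠ 0`, and `Φ_t^d(0) = 0`. -/
def phid {n : ℕ} (Φ : SchwartzMap (EuclideanSpace ℝ (Fin n)) ℝ) (t : ℝ) (j : Fin n → ℤ) : ℝ :=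
  if j = 0 then 0 else t ^ (-(n : ℝ)) * Φ (t⁻¹ • toE j)

/-- Discrete convolution `(b ∗ c)(j) = ∑_i b(i) c(j-i)`. -/
def dconv {n : ℕ} (b c : (Fin n → ℤ) → ℝ) (j : Fin n → ℤ) : ℝ :=
  ∑' i : Fin n → ℤ, b i * c (j - i)

/-- The maximal function `sup_{t>0} |(Φ_t^d ∗ b)(j)|`, valued in `ℝ≥0∞`. -/
def maxFn {n : ℕ} (Φ : SchwartzMap (EuclideanSpace ℝ (Fin n)) ℝ) (b : (Fin n → ℤ) → ℝ)
    (j : Fin n → ℤ) : ℝ≥0∞ :=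
  ⨆ (t : ℝ) (_ : 0 < t), ENNReal.ofReal |dconv (phid Φ t) b j|

/-- The `ℓ^p` quasinorm (`0 < p < ∞`) of a real sequence on `ℤⁿ`, valued in `ℝ≥0∞`. -/
def elp {n : ℕ} (p : ℝ) (f : (Fin n → ℤ) → ℝ) : ℝ≥0∞ :=
  (∑' j : Fin n → ℤ, ENNReal.ofReal |f j| ^ p) ^ (1 / p)

/-- The `ℓ^p` quasinorm of an `ℝ≥0∞`-valued sequence on `ℤⁿ`. -/
def elpE {n : ℕ} (p : ℝ) (f : (Fin n → ℤ) → ℝ≥0∞) : ℝ≥0∞ :=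
  (∑' j : Fin n → ℤ, f j ^ p) ^ (1 / p)

/-- The discrete Hardy space quasinorm `‖b‖_{H^p} = ‖b‖_{ℓ^p} + ‖sup_{t>0}|Φ_t^d ∗ b|‖_{ℓ^p}`. -/
def hpNorm {n : ℕ} (Φ : SchwartzMap (EuclideanSpace ℝ (Fin n)) ℝ) (p : ℝ)
    (b : (Fin n → ℤ) → ℝ) : ℝ≥0∞ :=
  elp p b + elpE p (maxFn Φ b)

/-- A `(p, ∞, N)`-atom supported in the discrete cube `dcube k0 m`. -/
def IsDiscreteAtom {n : ℕ} (p : ℝ) (N : ℕ) (k0 : Fin n → ℤ) (m : ℕ)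
    (a : (Fin n → ℤ) → ℝ) : Prop :=
  (∀ j, j ∉ dcube k0 m → a j = 0) ∧
  (∀ j, |a j| ≤ ((dcube k0 m).card : ℝ) ^ (-(1 / p))) ∧
  (∀ β : Fin n → ℕ, (∑ l, β l) ≤ N →
    ∑ j ∈ dcube k0 m, (∏ l, ((j l : ℝ)) ^ β l) * a j = 0)

/-- The centered discrete fractional maximal operator
`(M_α b)(j) = sup_m (#Q_{j,m})^{α/n - 1} ∑_{i ∈ Q_{j,m}} |b(i)|`. -/
def fracMax {n : ℕ} (α : ℝ) (b : (Fin n → ℤ) → ℝ) (j : Fin n → ℤ) : ℝ≥0∞ :=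
  ⨆ m : ℕ, ENNReal.ofReal
    ((((dcube j m).card : ℝ) ^ (α / n - 1)) * ∑ i ∈ dcube j m, |b i|)

/-- The Taylor polynomial of degree `N - 1` of `f` centered at `c`, evaluated at `x`. -/
def taylorPoly {n : ℕ} (f : EuclideanSpace ℝ (Fin n) → ℝ) (c x : EuclideanSpace ℝ (Fin n))
    (N : ℕ) : ℝ :=
  ∑ r ∈ Finset.range N, (1 / r.factorial : ℝ) * iteratedFDeriv ℝ r f c (fun _ => x - c)

/-!
Since `supp Φ ⊂ B_{1/4}(0)`, the kernel `Φ_t^d` lives on at most `t^n` nonzero lattice points,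
where it is bounded by `t^{-n} ‖Φ‖_∞`; hence `|Φ_t^d ∗ b| ≤ ‖Φ‖_∞ ‖b‖_∞` uniformly in `t`, and it
suffices to bound `I_α a` pointwise. As `|v| ≥ |v|_∞`, `|I_α a(j)| ≤ ‖a‖_∞ ∑ |v|_∞^{α-n}` over the
nonzero `v ∈ Q - j`. With `T = 2m + 1` the side of `Q`, the points with `|v|_∞ ≤ T` contribute
`≲ ∑_{s ≤ T} s^{n-1} s^{α-n} ≲ T^α` by summing over the cube shells `|v|_∞ = s`, and each of the
remaining at most `#Q = T^n` points contributes at most `T^{α-n}`. Since `T^α = (#Q)^{α/n}`, this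
gives `|I_α a| ≲ (#Q)^{α/n - 1/p}`.
-/

open Finset Real

section

variable {n : ℕ}

lemma abs_le_znorm (v : Fin n → ℤ) (l : Fin n) : |(v l : ℝ)| ≤ znorm v :=
  Real.abs_le_sqrt (single_le_sum (fun i _ => sq_nonneg (v i : ℝ)) (mem_univ l))

lemma zinf_le_znorm (v : Fin n → ℤ) : (zinf v : ℝ) ≤ znorm v := by
  have : zinf v ≤ ⌊znorm v⌋₊ :=
    Finset.sup_le fun l _ => Nat.le_floor (by simpa [Nat.cast_natAbs] using abs_le_znorm v l)
  exact (Nat.cast_le.2 this).trans (Nat.floor_le (Real.sqrt_nonneg _))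

lemma zinf_pos {v : Fin n → ℤ} (hv : v ≠ 0) : 0 < zinf v := by
  obtain ⟨l, hl⟩ := Function.ne_iff.1 hv
  exact Finset.lt_sup_iff.2 ⟨l, mem_univ l, Int.natAbs_pos.2 hl⟩

lemma norm_toE (v : Fin n → ℤ) : ‖toE v‖ = znorm v := by
  simp [EuclideanSpace.norm_eq, toE, znorm]

lemma mem_dcube_zero {v : Fin n → ℤ} {m : ℕ} : v ∈ dcube 0 m ↔ zinf v ≤ m := by
  simp only [dcube, mem_Icc, Pi.le_def, ← forall_and, zinf, Finset.sup_le_iff, mem_univ,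
    true_imp_iff, Pi.zero_apply, zero_sub, zero_add]
  exact forall_congr' fun l => by omega

lemma card_dcube (c : Fin n → ℤ) (m : ℕ) : #(dcube c m) = (2 * m + 1) ^ n := by
  rw [dcube, Pi.card_Icc, Finset.prod_eq_pow_card (b := 2 * m + 1) (fun l _ => by
    rw [Int.card_Icc]; omega)]
  simp

lemma card_dcube_rpow_div (hn : n ≠ 0) (c : Fin n → ℤ) (m : ℕ) (α : ℝ) :
    (#(dcube c m) : ℝ) ^ (α / n) = ((2 * m + 1 : ℕ) : ℝ) ^ α := by
  rw [card_dcube, Nat.cast_pow, ← rpow_natCast, ← rpow_mul (by positivity),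
    mul_div_cancel₀ _ (Nat.cast_ne_zero.2 hn)]

lemma dcube_mono (c : Fin n → ℤ) : Monotone (dcube c) := fun _ _ h =>
  Icc_subset_Icc (fun l => by dsimp; omega) (fun l => by dsimp; omega)

lemma card_dcube_succ_sdiff_le (c : Fin n → ℤ) (k : ℕ) :
    (#(dcube c (k + 1) \ dcube c k) : ℝ) ≤ 2 * n * 3 ^ (n - 1) * ((k : ℝ) + 1) ^ (n - 1) := by
  rw [card_sdiff_of_subset (dcube_mono c k.le_succ), card_dcube, card_dcube,
    Nat.cast_sub (Nat.pow_le_pow_left (by omega) n)]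
  push_cast
  have hmax : max |(2 * (k + 1) + 1 : ℝ)| |2 * k + 1| ≤ 3 * ((k : ℝ) + 1) :=
    max_le (by rw [abs_of_nonneg (by positivity)]; linarith)
      (by rw [abs_of_nonneg (by positivity)]; linarith)
  calc ((2 * (k + 1) + 1 : ℝ)) ^ n - (2 * k + 1) ^ n
      ≤ |(2 * (k + 1) + 1 : ℝ) - (2 * k + 1)| * n
          * max |(2 * (k + 1) + 1 : ℝ)| |2 * k + 1| ^ (n - 1) :=
        (le_abs_self _).trans (abs_pow_sub_pow_le _ _ _)
    _ ≤ 2 * n * (3 * ((k : ℝ) + 1)) ^ (n - 1) := by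
        rw [show (2 * (k + 1) + 1 : ℝ) - (2 * k + 1) = 2 by ring, abs_two]
        gcongr
    _ = 2 * n * 3 ^ (n - 1) * ((k : ℝ) + 1) ^ (n - 1) := by rw [mul_pow]; ring

lemma rpow_sub_one_le_rpow_sub_rpow {α : ℝ} (hα0 : 0 < α) (hα1 : α ≤ 1) {x : ℝ}
    (hx : 1 ≤ x) :
    α * x ^ (α - 1) ≤ x ^ α - (x - 1) ^ α := by
  have hx0 : 0 < x := by linarith
  have hinv : x⁻¹ ≤ 1 := inv_le_one_of_one_le₀ hx
  have bernoulli : (1 - x⁻¹) ^ α ≤ 1 - α * x⁻¹ := by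
    simpa [sub_eq_add_neg] using
      rpow_one_add_le_one_add_mul_self (s := -x⁻¹) (by linarith) hα0.le hα1
  calc α * x ^ (α - 1) = x ^ α - x ^ α * (1 - α * x⁻¹) := by
        rw [rpow_sub_one hx0.ne']; ring
    _ ≤ x ^ α - x ^ α * (1 - x⁻¹) ^ α := by gcongr
    _ = x ^ α - (x - 1) ^ α := by
        rw [← mul_rpow hx0.le (by linarith), mul_sub, mul_inv_cancel₀ hx0.ne', mul_one]

lemma sum_range_succ_rpow_sub_one_le {α : ℝ} (hα : 0 < α) (T : ℕ) :
    ∑ k ∈ range T, ((k : ℝ) + 1) ^ (α - 1) ≤ (1 + 1 / α) * (T : ℝ) ^ α := by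
  have hTα : 0 ≤ (T : ℝ) ^ α := by positivity
  rcases le_or_gt α 1 with hα1 | hα1
  · have telescope (N : ℕ) :
        ∑ k ∈ range N, ((k : ℝ) + 1) ^ (α - 1) ≤ (N : ℝ) ^ α / α := by
      induction N with
      | zero => simp [zero_rpow hα.ne']
      | succ N ih =>
        have step := rpow_sub_one_le_rpow_sub_rpow hα hα1 (x := (N : ℝ) + 1)
          (le_add_of_nonneg_left N.cast_nonneg)
        rw [add_sub_cancel_right] at step
        have hlast :
            ((N : ℝ) + 1) ^ (α - 1) ≤ (((N : ℝ) + 1) ^ α - (N : ℝ) ^ α) / α := by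
          rw [le_div_iff₀ hα]; linarith
        rw [sum_range_succ, Nat.cast_succ]
        calc _ ≤ (N : ℝ) ^ α / α + (((N : ℝ) + 1) ^ α - (N : ℝ) ^ α) / α :=
              add_le_add ih hlast
          _ = ((N : ℝ) + 1) ^ α / α := by ring
    calc _ ≤ (T : ℝ) ^ α / α := telescope T
      _ ≤ (1 + 1 / α) * (T : ℝ) ^ α := by rw [add_mul, one_div_mul_eq_div]; linarith
  · calc ∑ k ∈ range T, ((k : ℝ) + 1) ^ (α - 1)
          ≤ ∑ _k ∈ range T, (T : ℝ) ^ (α - 1) := by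
          gcongr with k hk
          exact_mod_cast mem_range.1 hk
      _ = (T : ℝ) ^ α := by
          rcases T.eq_zero_or_pos with rfl | hT
          · simp [zero_rpow hα.ne']
          · rw [sum_const, card_range, nsmul_eq_mul, rpow_sub_one (by positivity)]
            field_simp
      _ ≤ (1 + 1 / α) * (T : ℝ) ^ α :=
          le_mul_of_one_le_left hTα (by linarith [one_div_pos.2 hα])

lemma sum_dcube_zero_erase_zinf_rpow_le {α : ℝ} (hα : 0 < α) (hαn : α < n) (T : ℕ) :
    ∑ v ∈ (dcube (0 : Fin n → ℤ) T).erase 0, (zinf v : ℝ) ^ (α - n)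
      ≤ 2 * n * 3 ^ (n - 1) * (1 + 1 / α) * (T : ℝ) ^ α := by
  have hn : 1 ≤ n := Nat.cast_pos.1 (hα.trans hαn)
  set shells : ℕ → Finset (Fin n → ℤ) := fun k => (dcube 0 k).erase 0
  have shells_mono : Monotone shells := fun _ _ h => erase_subset_erase _ (dcube_mono 0 h)
  have shells_zero : shells 0 = ∅ := by
    ext v
    simpa [shells, mem_dcube_zero] using fun hv => (zinf_pos hv).ne'
  have sum_shell_le (k : ℕ) : ∑ v ∈ shells (k + 1) \ shells k, (zinf v : ℝ) ^ (α - n)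
      ≤ 2 * n * 3 ^ (n - 1) * ((k : ℝ) + 1) ^ (α - 1) := by
    have hk : (0 : ℝ) < k + 1 := by positivity
    have hsub : shells (k + 1) \ shells k ⊆ dcube 0 (k + 1) \ dcube 0 k := by
      intro v hv
      simp only [shells, mem_sdiff, mem_erase] at hv ⊢
      tauto
    have hterm : ∀ v ∈ shells (k + 1) \ shells k,
        (zinf v : ℝ) ^ (α - n) ≤ ((k : ℝ) + 1) ^ (α - n) := by
      intro v hv
      simp only [shells, mem_sdiff, mem_erase, mem_dcube_zero, not_and, not_le] at hv
      exact rpow_le_rpow_of_nonpos hk (by exact_mod_cast hv.2 hv.1.1) (by linarith)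
    calc ∑ v ∈ shells (k + 1) \ shells k, (zinf v : ℝ) ^ (α - n)
        ≤ #(dcube 0 (k + 1) \ dcube 0 k) * ((k : ℝ) + 1) ^ (α - n) := by
          refine (sum_le_card_nsmul _ _ _ hterm).trans ?_
          rw [nsmul_eq_mul]
          gcongr
      _ ≤ 2 * n * 3 ^ (n - 1) * ((k : ℝ) + 1) ^ (n - 1) * ((k : ℝ) + 1) ^ (α - n) := by
          gcongr
          exact card_dcube_succ_sdiff_le 0 k
      _ = 2 * n * 3 ^ (n - 1) * ((k : ℝ) + 1) ^ (α - 1) := by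
          rw [mul_assoc, ← rpow_natCast ((k : ℝ) + 1), ← rpow_add hk, Nat.cast_sub hn]
          ring_nf
  rw [sum_eq_sum_range_sdiff shells shells_mono, shells_zero, sum_empty, zero_add]
  calc ∑ k ∈ range T, ∑ v ∈ shells (k + 1) \ shells k, (zinf v : ℝ) ^ (α - n)
      ≤ ∑ k ∈ range T, 2 * n * 3 ^ (n - 1) * ((k : ℝ) + 1) ^ (α - 1) :=
        sum_le_sum fun k _ => sum_shell_le k
    _ ≤ 2 * n * 3 ^ (n - 1) * ((1 + 1 / α) * (T : ℝ) ^ α) := by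
        rw [← mul_sum]
        gcongr
        exact sum_range_succ_rpow_sub_one_le hα T
    _ = 2 * n * 3 ^ (n - 1) * (1 + 1 / α) * (T : ℝ) ^ α := by ring

lemma sum_erase_zero_zinf_rpow_le_of_card_le {α : ℝ} (hα : 0 < α) (hαn : α < n)
    {A : Finset (Fin n → ℤ)} {T : ℕ} (hT : 0 < T) (hA : #A ≤ T ^ n) :
    ∑ v ∈ A.erase 0, (zinf v : ℝ) ^ (α - n)
      ≤ (2 * n * 3 ^ (n - 1) * (1 + 1 / α) + 1) * (T : ℝ) ^ α := by
  have hT' : (0 : ℝ) < T := by exact_mod_cast hT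
  rw [← sum_filter_add_sum_filter_not (A.erase 0) (fun v => zinf v ≤ T)]
  have near : ∑ v ∈ (A.erase 0).filter (fun v => zinf v ≤ T), (zinf v : ℝ) ^ (α - n)
      ≤ 2 * n * 3 ^ (n - 1) * (1 + 1 / α) * (T : ℝ) ^ α := by
    refine le_trans (sum_le_sum_of_subset_of_nonneg ?_ fun _ _ _ => by positivity)
      (sum_dcube_zero_erase_zinf_rpow_le hα hαn T)
    intro v hv
    simp only [mem_filter, mem_erase] at hv
    simpa [mem_erase, mem_dcube_zero] using ⟨hv.1.1, hv.2⟩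
  have far : ∑ v ∈ (A.erase 0).filter (fun v => ¬ zinf v ≤ T), (zinf v : ℝ) ^ (α - n)
      ≤ (T : ℝ) ^ α := by
    have hterm : ∀ v ∈ (A.erase 0).filter (fun v => ¬ zinf v ≤ T),
        (zinf v : ℝ) ^ (α - n) ≤ (T : ℝ) ^ (α - n) := by
      intro v hv
      simp only [mem_filter, not_le] at hv
      exact rpow_le_rpow_of_nonpos hT' (by exact_mod_cast hv.2.le) (by linarith)
    calc _ ≤ #((A.erase 0).filter (fun v => ¬ zinf v ≤ T)) * (T : ℝ) ^ (α - n) := by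
          rw [← nsmul_eq_mul]; exact sum_le_card_nsmul _ _ _ hterm
      _ ≤ (T : ℝ) ^ n * (T : ℝ) ^ (α - n) := by
          gcongr
          exact_mod_cast ((card_filter_le _ _).trans (card_erase_le)).trans hA
      _ = (T : ℝ) ^ α := by
          rw [← rpow_natCast, ← rpow_add hT']; ring_nf
  linarith

lemma rieszPot_eq_sum {α : ℝ} {b : (Fin n → ℤ) → ℝ} {A : Finset (Fin n → ℤ)}
    (hbA : ∀ i ∉ A, b i = 0) (j : Fin n → ℤ) :
    rieszPot α b j = ∑ i ∈ A.erase j, b i * znorm (i - j) ^ (α - n) := by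
  rw [rieszPot, tsum_eq_sum (s := A.subtype (· ≠ j)) fun i hi => by
      rw [hbA i (fun h => hi (mem_subtype.2 h)), zero_mul],
    sum_subtype_eq_sum_filter (fun i => b i * znorm (i - j) ^ (α - n)), filter_ne']

lemma sum_erase_comp_sub {G M : Type*} [AddGroup G] [DecidableEq G] [AddCommMonoid M]
    (g : G → M) (A : Finset G) (j : G) :
    ∑ i ∈ A.erase j, g (i - j)
      = ∑ v ∈ (A.map (Equiv.subRight j).toEmbedding).erase 0, g v := by
  rw [← sub_self j, ← Equiv.subRight_apply, ← Equiv.coe_toEmbedding, ← map_erase, sum_map]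
  rfl

lemma abs_rieszPot_le {α : ℝ} (hα : 0 < α) (hαn : α < n) {b : (Fin n → ℤ) → ℝ}
    {A : Finset (Fin n → ℤ)} {K : ℝ} {T : ℕ} (hbA : ∀ i ∉ A, b i = 0)
    (hbK : ∀ i, |b i| ≤ K) (hT : 0 < T) (hA : #A ≤ T ^ n) (j : Fin n → ℤ) :
    |rieszPot α b j| ≤ K * ((2 * n * 3 ^ (n - 1) * (1 + 1 / α) + 1) * (T : ℝ) ^ α) := by
  have hterm : ∀ i ∈ A.erase j,
      |b i * znorm (i - j) ^ (α - n)| ≤ K * (zinf (i - j) : ℝ) ^ (α - n) := by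
    intro i hi
    have hz : (0 : ℝ) < zinf (i - j) := by
      exact_mod_cast zinf_pos (sub_ne_zero_of_ne (ne_of_mem_erase hi))
    have hznorm : 0 ≤ znorm (i - j) ^ (α - n) := by unfold znorm; positivity
    rw [abs_mul, abs_of_nonneg hznorm]
    exact mul_le_mul (hbK i) (rpow_le_rpow_of_nonpos hz (zinf_le_znorm _) (by linarith))
      hznorm ((abs_nonneg _).trans (hbK i))
  calc |rieszPot α b j| ≤ ∑ i ∈ A.erase j, K * (zinf (i - j) : ℝ) ^ (α - n) := by
        rw [rieszPot_eq_sum hbA]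
        exact (abs_sum_le_sum_abs _ _).trans (sum_le_sum hterm)
    _ = K * ∑ v ∈ (A.map (Equiv.subRight j).toEmbedding).erase 0,
          (zinf v : ℝ) ^ (α - n) := by
        rw [← mul_sum, sum_erase_comp_sub (fun v => (zinf v : ℝ) ^ (α - n))]
    _ ≤ K * ((2 * n * 3 ^ (n - 1) * (1 + 1 / α) + 1) * (T : ℝ) ^ α) := by
        gcongr
        · exact (abs_nonneg _).trans (hbK j)
        · exact sum_erase_zero_zinf_rpow_le_of_card_le hα hαn hT (by rwa [card_map])

section MaximalFunction

variable (Φ : SchwartzMap (EuclideanSpace ℝ (Fin n)) ℝ)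

lemma abs_phid_le {t : ℝ} (ht : 0 < t) (i : Fin n → ℤ) :
    |phid Φ t i| ≤ t ^ (-(n : ℝ)) * SchwartzMap.seminorm ℝ 0 0 Φ := by
  unfold phid
  split_ifs
  · simp only [abs_zero]; positivity
  · rw [abs_mul, abs_of_pos (by positivity)]
    gcongr
    exact SchwartzMap.norm_le_seminorm ℝ Φ _

variable {Φ}

lemma phid_eq_zero_of_notMem (hΦ : Function.support Φ ⊆ Metric.ball 0 (1 / 4)) {t : ℝ}
    (ht : 0 < t) {i : Fin n → ℤ} (hi : i ∉ (dcube 0 ⌊t / 4⌋₊).erase 0) :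
    phid Φ t i = 0 := by
  unfold phid
  split_ifs with hi0
  · rfl
  by_contra hΦi
  have hball := hΦ (Function.mem_support.2 (right_ne_zero_of_mul hΦi))
  rw [mem_ball_zero_iff, norm_smul, norm_inv, Real.norm_of_nonneg ht.le, norm_toE,
    inv_mul_lt_iff₀ ht] at hball
  exact hi (mem_erase.2 ⟨hi0, mem_dcube_zero.2
    (Nat.le_floor ((zinf_le_znorm i).trans (by linarith)))⟩)

lemma card_dcube_zero_floor_erase_le {t : ℝ} (ht : 0 < t) :
    (#((dcube (0 : Fin n → ℤ) ⌊t / 4⌋₊).erase 0) : ℝ) ≤ t ^ n := by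
  rw [card_erase_of_mem (mem_dcube_zero.2 (by simp [zinf])), card_dcube]
  rcases Nat.eq_zero_or_pos ⌊t / 4⌋₊ with h0 | hpos
  · simp [h0]; positivity
  · have h4 : (⌊t / 4⌋₊ : ℝ) ≤ t / 4 := Nat.floor_le (by positivity)
    have h1 : (1 : ℝ) ≤ ⌊t / 4⌋₊ := by exact_mod_cast hpos
    calc (((2 * ⌊t / 4⌋₊ + 1) ^ n - 1 : ℕ) : ℝ)
          ≤ ((2 * ⌊t / 4⌋₊ + 1 : ℕ) : ℝ) ^ n := by
          exact_mod_cast Nat.sub_le _ _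
      _ ≤ t ^ n := by gcongr; push_cast; linarith

lemma abs_dconv_phid_le (hΦ : Function.support Φ ⊆ Metric.ball 0 (1 / 4))
    {b : (Fin n → ℤ) → ℝ} {K : ℝ} (hbK : ∀ i, |b i| ≤ K) {t : ℝ} (ht : 0 < t)
    (j : Fin n → ℤ) :
    |dconv (phid Φ t) b j| ≤ SchwartzMap.seminorm ℝ 0 0 Φ * K := by
  set S := (dcube (0 : Fin n → ℤ) ⌊t / 4⌋₊).erase 0
  have hK : 0 ≤ K := (abs_nonneg _).trans (hbK 0)
  rw [dconv, tsum_eq_sum (s := S) fun i hi => by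
    rw [phid_eq_zero_of_notMem hΦ ht hi, zero_mul]]
  calc |∑ i ∈ S, phid Φ t i * b (j - i)|
      ≤ ∑ _i ∈ S, t ^ (-(n : ℝ)) * SchwartzMap.seminorm ℝ 0 0 Φ * K := by
        refine (abs_sum_le_sum_abs _ _).trans (sum_le_sum fun i _ => ?_)
        rw [abs_mul]
        exact mul_le_mul (abs_phid_le Φ ht i) (hbK _) (abs_nonneg _) (by positivity)
    _ ≤ t ^ n * (t ^ (-(n : ℝ)) * SchwartzMap.seminorm ℝ 0 0 Φ * K) := by
        rw [sum_const, nsmul_eq_mul]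
        gcongr
        exact card_dcube_zero_floor_erase_le ht
    _ = SchwartzMap.seminorm ℝ 0 0 Φ * K := by
        rw [← mul_assoc, ← mul_assoc, ← rpow_natCast, ← rpow_add ht, add_neg_cancel,
          rpow_zero, one_mul]

lemma maxFn_le (hΦ : Function.support Φ ⊆ Metric.ball 0 (1 / 4)) {b : (Fin n → ℤ) → ℝ}
    {K : ℝ} (hbK : ∀ i, |b i| ≤ K) (j : Fin n → ℤ) :
    maxFn Φ b j ≤ ENNReal.ofReal (SchwartzMap.seminorm ℝ 0 0 Φ * K) :=
  iSup₂_le fun _ ht => ENNReal.ofReal_le_ofReal (abs_dconv_phid_le hΦ hbK ht j)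

end MaximalFunction

end

/-- `sup_{t>0} |(Φ_t^d ∗ I_α a)(j)| ≤ C (#Q)^{α/n - 1/p}` for sequences `a`
supported in a discrete cube `Q` with `‖a‖_∞ ≤ (#Q)^{-1/p}`. -/
theorem stmt3 (n : ℕ) (α : ℝ) (hα : 0 < α) (hαn : α < n)
    (Φ : SchwartzMap (EuclideanSpace ℝ (Fin n)) ℝ)
    (hΦ : Function.support (⇑Φ) ⊆ Metric.ball 0 (1 / 4)) :
    ∃ C > (0 : ℝ), ∀ (p : ℝ), 0 < p → p ≤ 1 →
      ∀ (k0 : Fin n → ℤ) (m : ℕ) (a : (Fin n → ℤ) → ℝ),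
        (∀ j, j ∉ dcube k0 m → a j = 0) →
        (∀ j, |a j| ≤ ((dcube k0 m).card : ℝ) ^ (-(1 / p))) →
        ∀ j : Fin n → ℤ,
          maxFn Φ (rieszPot α a) j
            ≤ ENNReal.ofReal (C * ((dcube k0 m).card : ℝ) ^ (α / n - 1 / p)) := by
  set Cα : ℝ := 2 * n * 3 ^ (n - 1) * (1 + 1 / α) + 1
  refine ⟨(SchwartzMap.seminorm ℝ 0 0 Φ + 1) * Cα, by positivity, ?_⟩
  intro p _ _ k0 m a ha0 ha1 j
  have hn : n ≠ 0 := (Nat.cast_pos.1 (hα.trans hαn)).ne'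
  have hQ : (0 : ℝ) < #(dcube k0 m) := by rw [card_dcube]; positivity
  have hQα : (#(dcube k0 m) : ℝ) ^ (-(1 / p)) * ((2 * m + 1 : ℕ) : ℝ) ^ α
      = (#(dcube k0 m) : ℝ) ^ (α / n - 1 / p) := by
    rw [sub_eq_neg_add, rpow_add hQ, card_dcube_rpow_div hn]
  have hI (k : Fin n → ℤ) :
      |rieszPot α a k| ≤ Cα * (#(dcube k0 m) : ℝ) ^ (α / n - 1 / p) := by
    refine (abs_rieszPot_le hα hαn ha0 ha1 (by omega) (card_dcube k0 m).le k).trans_eq ?_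
    rw [← hQα]; ring
  refine (maxFn_le hΦ hI j).trans (ENNReal.ofReal_le_ofReal ?_)
  rw [mul_assoc]
  exact mul_le_mul_of_nonneg_right (by linarith) (by positivity)
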